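/- arXiv:1706.10010 — 6 statements merged into one kernel-verified Lean document; each statement's English description precedes it below -/
import Mathlib

section
/- In the two-variable polynomial ring F_q[X_1, X_2], for nonconstant polynomials f_1(X_1) ∈ F_q[X_1] and f_2(X_2) ∈ F_q[X_2], the ideal generated by f_1(X_1) and f_2(X_2) is an IP*-set in the additive group (F_q[X_1,X_2], +). -/
open Polynomial

lemma isIntegral_aux {F A : Type*} [Field F] [CommRing A] [Algebra F A]
    {f : Polynomial F} (hf : f ≠ 0) {x : A} (hx : Polynomial.aeval x f = 0) :
    IsIntegral F x :=
  ⟨f * Polynomial.C f.leadingCoeff⁻¹,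
    Polynomial.monic_mul_leadingCoeff_inv hf, by
      show Polynomial.aeval x (f * Polynomial.C f.leadingCoeff⁻¹) = 0
      rw [map_mul, Polynomial.aeval_C, hx, zero_mul]⟩

/-- Finite sums of distinct terms of a sequence. -/
def FinSums {S : Type*} [AddCommMonoid S] (g : ℕ → S) : Set S :=
  {s | ∃ F : Finset ℕ, F.Nonempty ∧ s = ∑ n ∈ F, g n}

/-- An IP-set: contains all finite sums of distinct terms of an injective sequence. -/
def IsIPSet {S : Type*} [AddCommMonoid S] (A : Set S) : Prop :=
  ∃ g : ℕ → S, Function.Injective g ∧ FinSums g ⊆ A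

/-- An IP*-set: meets every IP-set. -/
def IsIPStarSet {S : Type*} [AddCommMonoid S] (A : Set S) : Prop :=
  ∀ B : Set S, IsIPSet B → (A ∩ B).Nonempty

theorem ideal_two_vars_isIPStar {F : Type*} [Field F] [Fintype F]
    (f₁ f₂ : Polynomial F) (hf₁ : 0 < f₁.natDegree) (hf₂ : 0 < f₂.natDegree) :
    IsIPStarSet ((Ideal.span
        {Polynomial.aeval (MvPolynomial.X 0 : MvPolynomial (Fin 2) F) f₁,
         Polynomial.aeval (MvPolynomial.X 1 : MvPolynomial (Fin 2) F) f₂} :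
      Ideal (MvPolynomial (Fin 2) F)) : Set (MvPolynomial (Fin 2) F)) := by
  set I : Ideal (MvPolynomial (Fin 2) F) := Ideal.span
    {Polynomial.aeval (MvPolynomial.X 0 : MvPolynomial (Fin 2) F) f₁,
     Polynomial.aeval (MvPolynomial.X 1 : MvPolynomial (Fin 2) F) f₂} with hI
  have hf₁0 : f₁ ≠ 0 := fun h => by simp [h] at hf₁
  have hf₂0 : f₂ ≠ 0 := fun h => by simp [h] at hf₂
  -- the quotient is finite
  have hmem : ∀ i : Fin 2,
      (Polynomial.aeval (MvPolynomial.X i : MvPolynomial (Fin 2) F)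
        (if i = 0 then f₁ else f₂)) ∈ I := by
    intro i
    fin_cases i <;> simp [hI] <;>
      exact Ideal.subset_span (by simp)
  have hint : ∀ x ∈ (Ideal.Quotient.mk I) ''
      (Set.range (MvPolynomial.X : Fin 2 → MvPolynomial (Fin 2) F)), IsIntegral F x := by
    rintro x ⟨-, ⟨i, rfl⟩, rfl⟩
    have h0 : Polynomial.aeval ((Ideal.Quotient.mk I) (MvPolynomial.X i))
        (if i = 0 then f₁ else f₂) = 0 := by
      have := Polynomial.aeval_algHom_apply (Ideal.Quotient.mkₐ F I)
        (MvPolynomial.X i) (if i = 0 then f₁ else f₂)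
      rw [Ideal.Quotient.mkₐ_eq_mk] at this
      rw [this]
      rw [Ideal.Quotient.eq_zero_iff_mem]
      exact hmem i
    exact isIntegral_aux (by split <;> assumption) h0
  have hadj : Algebra.adjoin F ((Ideal.Quotient.mk I) ''
      (Set.range (MvPolynomial.X : Fin 2 → MvPolynomial (Fin 2) F))) = ⊤ := by
    have := AlgHom.map_adjoin (Ideal.Quotient.mkₐ F I)
      (Set.range (MvPolynomial.X : Fin 2 → MvPolynomial (Fin 2) F))
    rw [MvPolynomial.adjoin_range_X, Algebra.map_top] at this
    rw [Ideal.Quotient.mkₐ_eq_mk] at this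
    rw [← this]
    exact (AlgHom.range_eq_top _).mpr Ideal.Quotient.mk_surjective
  have hfg := fg_adjoin_of_finite
    (Set.Finite.image _ (Set.finite_range _)) hint
  rw [hadj] at hfg
  have hfinmod : Module.Finite F (MvPolynomial (Fin 2) F ⧸ I) := by
    refine ⟨?_⟩
    rwa [Algebra.top_toSubmodule] at hfg
  have hfinQ : Finite (MvPolynomial (Fin 2) F ⧸ I) := Module.finite_of_finite F
  -- main pigeonhole argument
  rintro B ⟨g, hg, hsub⟩
  obtain ⟨a, b, hab, heq⟩ := Finite.exists_ne_map_eq_of_infinite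
    (fun n : ℕ => (Ideal.Quotient.mk I) (∑ k ∈ Finset.range n, g k))
  wlog hlt : a < b generalizing a b
  · exact this b a hab.symm heq.symm (by omega)
  refine ⟨∑ k ∈ Finset.Ico a b, g k, ?_, hsub ⟨Finset.Ico a b, ?_, rfl⟩⟩
  · have : (Ideal.Quotient.mk I) (∑ k ∈ Finset.Ico a b, g k) = 0 := by
      rw [Finset.sum_Ico_eq_sub _ hlt.le, map_sub, heq, sub_self]
    exact Ideal.Quotient.eq_zero_iff_mem.mp this
  · exact Finset.nonempty_Ico.mpr hlt
end

section
/- Let φ : (F_q[x]∖{0}, ·) → (ℕ, +) be φ(f) = deg f. Then a set C ⊆ ℕ is an IP*-set in (ℕ,+) if and only if φ^{-1}(C) is an IP*-set in (F_q[x]∖{0}, ·). -/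
open Polynomial

/-- Finite products of distinct terms of a sequence. -/
def FinProds {S : Type*} [CommMonoid S] (g : ℕ → S) : Set S :=
  {s | ∃ F : Finset ℕ, F.Nonempty ∧ s = ∏ n ∈ F, g n}

/-- A multiplicative IP-set. -/
def IsMulIPSet {S : Type*} [CommMonoid S] (A : Set S) : Prop :=
  ∃ g : ℕ → S, Function.Injective g ∧ FinProds g ⊆ A

/-- A multiplicative IP*-set: meets every multiplicative IP-set. -/
def IsMulIPStarSet {S : Type*} [CommMonoid S] (A : Set S) : Prop :=
  ∀ B : Set S, IsMulIPSet B → (A ∩ B).Nonempty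

lemma finite_bddDeg {F : Type*} [Field F] [Fintype F] (d : ℕ) :
    {f : Polynomial F | f.natDegree ≤ d}.Finite := by
  apply Set.Finite.of_finite_image (f := fun f => fun i : Fin (d+1) => f.coeff i)
  · exact Set.toFinite _
  · intro f hf g hg h
    ext i
    by_cases hi : i ≤ d
    · exact congrFun h ⟨i, Nat.lt_succ_of_le hi⟩
    · rw [coeff_eq_zero_of_natDegree_lt (lt_of_le_of_lt hf (not_le.1 hi)),
        coeff_eq_zero_of_natDegree_lt (lt_of_le_of_lt hg (not_le.1 hi))]

theorem IPStar_correspondence_deg {F : Type*} [Field F] [Fintype F]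
    (C : Set ℕ) :
    IsIPStarSet C ↔
      IsMulIPStarSet ((fun f : nonZeroDivisors (Polynomial F) =>
        (f : Polynomial F).natDegree) ⁻¹' C) := by
  constructor
  · intro hC B ⟨g, hg, hsub⟩
    set h : ℕ → ℕ := fun n => ((g n : Polynomial F)).natDegree with hh
    have htend : Filter.Tendsto h Filter.atTop Filter.atTop := by
      rw [Filter.tendsto_atTop]
      intro b
      rw [← Nat.cofinite_eq_atTop, Filter.eventually_cofinite]
      have hfin : ((↑) ⁻¹' {f : Polynomial F | f.natDegree ≤ b} :
          Set (nonZeroDivisors (Polynomial F))).Finite :=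
        (finite_bddDeg b).preimage Subtype.val_injective.injOn
      apply Set.Finite.subset ((hfin.preimage hg.injOn))
      intro n hn
      simp only [hh, Set.mem_preimage, Set.mem_setOf_eq] at *
      omega
    obtain ⟨φ, hφ, hmono⟩ := Filter.strictMono_subseq_of_tendsto_atTop htend
    obtain ⟨c, hcC, K, hK, hKc⟩ := hC (FinSums (h ∘ φ)) ⟨h ∘ φ, hmono.injective, le_refl _⟩
    refine ⟨∏ k ∈ K, g (φ k), ?_, hsub ⟨K.image φ, hK.image φ, ?_⟩⟩
    · have hcoe : ((∏ k ∈ K, g (φ k) : nonZeroDivisors (Polynomial F)) : Polynomial F)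
          = ∏ k ∈ K, (g (φ k) : Polynomial F) := by
        push_cast; rfl
      simp only [Set.mem_preimage, hcoe]
      rw [natDegree_prod _ _ (fun k _ => nonZeroDivisors.coe_ne_zero _)]
      exact hKc ▸ hcC
    · rw [Finset.prod_image (fun a _ b _ hab => hφ.injective hab)]
  · intro hC B ⟨g, hg, hsub⟩
    set p : ℕ → nonZeroDivisors (Polynomial F) := fun n =>
      ⟨X ^ g n, mem_nonZeroDivisors_of_ne_zero (pow_ne_zero _ X_ne_zero)⟩ with hp
    have hpinj : Function.Injective p := by
      intro a b hab
      apply hg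
      have := congrArg (fun f : nonZeroDivisors (Polynomial F) =>
        (f : Polynomial F).natDegree) hab
      simpa [hp, natDegree_X_pow] using this
    obtain ⟨f, hfC, K, hK, hKf⟩ := hC (FinProds p) ⟨p, hpinj, le_refl _⟩
    refine ⟨(f : Polynomial F).natDegree, hfC, hsub ⟨K, hK, ?_⟩⟩
    have hcoe : ((f : Polynomial F)) = ∏ k ∈ K, (X : Polynomial F) ^ g k := by
      rw [hKf]; push_cast; rfl
    rw [hcoe, natDegree_prod _ _ (fun k _ => pow_ne_zero _ X_ne_zero)]
    simp [natDegree_X_pow]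
end

section
/- Let (X, ℬ, μ, T) be a weakly mixing but not mildly mixing ℤ-system, and define the (F_q[x]∖{0}, ·)-action T_f = T^{deg f}. Then the induced action is weakly mixing (for all positive-measure A, B and ε > 0, the set {f : |μ(A ∩ T_f B) − μ(A)μ(B)| < ε} is central* in (F_q[x]∖{0}, ·)) but not mildly mixing (some such set fails to be IP*). -/
open Polynomial MeasureTheory

attribute [local instance] Ultrafilter.add Ultrafilter.addSemigroup
  Ultrafilter.mul Ultrafilter.semigroup

/-- An additive central set: a member of some minimal idempotent ultrafilter. -/
def IsCentralSet {G : Type*} [AddCommMonoid G] (A : Set G) : Prop :=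
  ∃ p : Ultrafilter G, p + p = p ∧
    (∀ r : Ultrafilter G, r + r = r → r + p = r → p + r = r → r = p) ∧ A ∈ p

/-- An additive central*-set: meets every central set. -/
def IsCentralStarSet {G : Type*} [AddCommMonoid G] (A : Set G) : Prop :=
  ∀ B : Set G, IsCentralSet B → (A ∩ B).Nonempty

/-- A multiplicative central set. -/
def IsMulCentralSet {G : Type*} [CommMonoid G] (A : Set G) : Prop :=
  ∃ p : Ultrafilter G, p * p = p ∧
    (∀ r : Ultrafilter G, r * r = r → r * p = r → p * r = r → r = p) ∧ A ∈ p

/-- A multiplicative central*-set: meets every multiplicative central set. -/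
def IsMulCentralStarSet {G : Type*} [CommMonoid G] (A : Set G) : Prop :=
  ∀ B : Set G, IsMulCentralSet B → (A ∩ B).Nonempty


section Aux

/-- Ultrafilter.map along a multiplicative-to-additive homomorphism is a homomorphism. -/
theorem ultraMapHom {P S : Type*} [Semigroup P] [AddSemigroup S]
    (φ : P → S) (hφ : ∀ a b : P, φ (a * b) = φ a + φ b) (U V : Ultrafilter P) :
    Ultrafilter.map φ (U * V) = Ultrafilter.map φ U + Ultrafilter.map φ V := by
  ext s
  have h1 : (s ∈ Ultrafilter.map φ (U * V)) ↔
      ∀ᶠ a in U, ∀ᶠ b in V, φ (a * b) ∈ s := Iff.rfl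
  have h2 : (s ∈ Ultrafilter.map φ U + Ultrafilter.map φ V) ↔
      ∀ᶠ a in U, ∀ᶠ b in V, φ a + φ b ∈ s := Iff.rfl
  rw [h1, h2]
  simp only [hφ]

theorem ultraMapContinuous {α β : Type*} (φ : α → β) :
    Continuous (Ultrafilter.map φ) :=
  ultrafilterBasis_is_basis.continuous_iff.2 <| Set.forall_mem_range.mpr fun s ↦
    ultrafilter_isOpen_basic (φ ⁻¹' s)

/-- Pushforward of a minimal idempotent along a surjective homomorphism (with a
homomorphic section) is a minimal idempotent. -/
theorem ultraMapMinimal {P S : Type*} [Semigroup P] [AddSemigroup S]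
    (φ : P → S) (hφ : ∀ a b : P, φ (a * b) = φ a + φ b)
    (ψ : S → P) (hψ : ∀ n : S, φ (ψ n) = n)
    (p : Ultrafilter P) (hpp : p * p = p)
    (hmin : ∀ r : Ultrafilter P, r * r = r → r * p = r → p * r = r → r = p) :
    (Ultrafilter.map φ p + Ultrafilter.map φ p = Ultrafilter.map φ p) ∧
    ∀ r : Ultrafilter S, r + r = r → r + Ultrafilter.map φ p = r →
      Ultrafilter.map φ p + r = r → r = Ultrafilter.map φ p := by
  set q := Ultrafilter.map φ p with hqdef
  have hq : q + q = q := by rw [hqdef, ← ultraMapHom φ hφ, hpp]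
  refine ⟨hq, fun r hrr hrq hqr => ?_⟩
  -- surjectivity of the pushforward
  have hsur : Ultrafilter.map φ (Ultrafilter.map ψ r) = r := by
    rw [Ultrafilter.map_map]
    have : φ ∘ ψ = id := funext hψ
    rw [this, Ultrafilter.map_id]
  -- the compact subsemigroup
  set E : Set (Ultrafilter P) := {u | Ultrafilter.map φ u = r ∧ u * p = u} with hE
  have hEne : E.Nonempty := by
    refine ⟨Ultrafilter.map ψ r * p, ?_, ?_⟩
    · rw [ultraMapHom φ hφ, hsur]; exact hrq
    · rw [mul_assoc, hpp]
  have hEclosed : IsClosed E := by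
    have h1 : IsClosed {u : Ultrafilter P | Ultrafilter.map φ u = r} :=
      isClosed_eq (ultraMapContinuous φ) continuous_const
    have h2 : IsClosed {u : Ultrafilter P | u * p = u} :=
      isClosed_eq (Ultrafilter.continuous_mul_left p) continuous_id
    exact h1.inter h2
  have hEmul : ∀ x ∈ E, ∀ y ∈ E, x * y ∈ E := by
    rintro x ⟨hx1, hx2⟩ y ⟨hy1, hy2⟩
    constructor
    · rw [ultraMapHom φ hφ, hx1, hy1, hrr]
    · rw [mul_assoc, hy2]
  obtain ⟨v, hvE, hvv⟩ := exists_idempotent_in_compact_subsemigroup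
    Ultrafilter.continuous_mul_left E hEne hEclosed.isCompact hEmul
  obtain ⟨hvr, hvp⟩ := hvE
  -- w = p * v is an idempotent below p, hence equals p
  have hpvp : (p * v) * p = p * v := by rw [mul_assoc, hvp]
  have hww : (p * v) * (p * v) = p * v := by
    rw [← mul_assoc, hpvp, mul_assoc, hvv]
  have hpw : p * (p * v) = p * v := by rw [← mul_assoc, hpp]
  have hw : p * v = p := hmin (p * v) hww hpvp hpw
  have : Ultrafilter.map φ (p * v) = q := by rw [hw]
  rw [ultraMapHom φ hφ, hvr] at this
  exact hqr.symm.trans this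

end Aux

theorem induced_action_weak_not_mild_mixing
    {F : Type*} [Field F] [Fintype F]
    {X : Type*} [MeasurableSpace X] (μ : Measure X) [IsProbabilityMeasure μ]
    (T : X → X) (hT : MeasurePreserving T μ μ) (hbij : Function.Bijective T)
    (hweak : ∀ A B : Set X, MeasurableSet A → MeasurableSet B →
      0 < μ A → 0 < μ B → ∀ ε : ℝ, 0 < ε →
      IsCentralStarSet {n : ℕ |
        |(μ (A ∩ T^[n] ⁻¹' B)).toReal - (μ A).toReal * (μ B).toReal| < ε})
    (hnotmild : ∃ A B : Set X, MeasurableSet A ∧ MeasurableSet B ∧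
      0 < μ A ∧ 0 < μ B ∧ ∃ ε : ℝ, 0 < ε ∧
      ¬ IsIPStarSet {n : ℕ |
        |(μ (A ∩ T^[n] ⁻¹' B)).toReal - (μ A).toReal * (μ B).toReal| < ε}) :
    (∀ A B : Set X, MeasurableSet A → MeasurableSet B →
      0 < μ A → 0 < μ B → ∀ ε : ℝ, 0 < ε →
      IsMulCentralStarSet {f : nonZeroDivisors (Polynomial F) |
        |(μ (A ∩ (T^[(f : Polynomial F).natDegree]) ⁻¹' B)).toReal -
          (μ A).toReal * (μ B).toReal| < ε}) ∧
    (∃ A B : Set X, MeasurableSet A ∧ MeasurableSet B ∧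
      0 < μ A ∧ 0 < μ B ∧ ∃ ε : ℝ, 0 < ε ∧
      ¬ IsMulIPStarSet {f : nonZeroDivisors (Polynomial F) |
        |(μ (A ∩ (T^[(f : Polynomial F).natDegree]) ⁻¹' B)).toReal -
          (μ A).toReal * (μ B).toReal| < ε}) := by
  -- the degree map and its section
  set φ : nonZeroDivisors (Polynomial F) → ℕ :=
    fun f => (f : Polynomial F).natDegree with hφdef
  have hφ : ∀ a b : nonZeroDivisors (Polynomial F), φ (a * b) = φ a + φ b := by
    intro a b
    have ha : (a : Polynomial F) ≠ 0 := nonZeroDivisors.coe_ne_zero a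
    have hb : (b : Polynomial F) ≠ 0 := nonZeroDivisors.coe_ne_zero b
    simp only [hφdef, Submonoid.coe_mul]
    exact Polynomial.natDegree_mul ha hb
  have hXpow : ∀ n : ℕ, (Polynomial.X : Polynomial F) ^ n ∈ nonZeroDivisors (Polynomial F) := by
    intro n
    exact mem_nonZeroDivisors_of_ne_zero (pow_ne_zero n Polynomial.X_ne_zero)
  set ψ : ℕ → nonZeroDivisors (Polynomial F) := fun n => ⟨Polynomial.X ^ n, hXpow n⟩ with hψdef
  have hψ : ∀ n : ℕ, φ (ψ n) = n := fun n => Polynomial.natDegree_X_pow n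
  constructor
  · -- weak mixing
    intro A B hA hB hA0 hB0 ε hε C hC
    obtain ⟨p, hpp, hpmin, hCp⟩ := hC
    obtain ⟨hq, hqmin⟩ := ultraMapMinimal φ hφ ψ hψ p hpp hpmin
    set S : Set ℕ :=
      {n : ℕ | |(μ (A ∩ T^[n] ⁻¹' B)).toReal - (μ A).toReal * (μ B).toReal| < ε} with hSdef
    have hScs : IsCentralStarSet S := hweak A B hA hB hA0 hB0 ε hε
    have hSq : S ∈ Ultrafilter.map φ p := by
      by_contra hn
      have hc : Sᶜ ∈ Ultrafilter.map φ p := Ultrafilter.compl_mem_iff_notMem.mpr hn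
      obtain ⟨x, hx1, hx2⟩ := hScs Sᶜ ⟨Ultrafilter.map φ p, hq, hqmin, hc⟩
      exact hx2 hx1
    have hpre : φ ⁻¹' S ∈ p := Ultrafilter.mem_map.mp hSq
    have key : ((φ ⁻¹' S) ∩ C) ∈ p := Filter.inter_mem hpre hCp
    exact p.nonempty_of_mem key
  · -- not mild mixing
    obtain ⟨A, B, hA, hB, hA0, hB0, ε, hε, hni⟩ := hnotmild
    refine ⟨A, B, hA, hB, hA0, hB0, ε, hε, ?_⟩
    set S : Set ℕ :=
      {n : ℕ | |(μ (A ∩ T^[n] ⁻¹' B)).toReal - (μ A).toReal * (μ B).toReal| < ε} with hSdef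
    intro hstar
    apply hni
    intro C hC
    obtain ⟨g, hginj, hgsub⟩ := hC
    have hψinj : Function.Injective ψ := by
      intro a b hab
      have := congrArg φ hab
      rwa [hψ, hψ] at this
    have hprod : ∀ G : Finset ℕ, (∏ n ∈ G, ψ (g n)) = ψ (∑ n ∈ G, g n) := by
      intro G
      apply Subtype.ext
      push_cast
      rw [Finset.prod_pow_eq_pow_sum]
    obtain ⟨f, hf1, hf2⟩ := hstar (FinProds (ψ ∘ g))
      ⟨ψ ∘ g, hψinj.comp hginj, fun x hx => hx⟩
    obtain ⟨G, hGne, hGeq⟩ := hf2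
    have hfs : φ f ∈ FinSums g := by
      refine ⟨G, hGne, ?_⟩
      rw [hGeq]
      have : (∏ n ∈ G, (ψ ∘ g) n) = ψ (∑ n ∈ G, g n) := hprod G
      rw [this, hψ]
    exact ⟨φ f, hf1, hgsub hfs⟩
end

section
/- Let (T_f)_{f ∈ F_q[x]} be a measure-preserving action of (F_q[x], +) on a probability space. Then the action is strongly mixing if and only if for every ε > 0 and every A ∈ ℬ with μ(A) > 0, the set {f ∈ F_q[x] : |μ(A ∩ T_f A) − μ(A)²| < ε} is a Δ*-set. -/
open Polynomial MeasureTheory Finset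

set_option linter.unusedSectionVars false

section Helpers


lemma mono_subseq_of_infinite {p : ℕ → Prop} (hp : {n | p n}.Infinite) :
    ∃ e : ℕ → ℕ, StrictMono e ∧ ∀ n, p (e n) :=
  ⟨Nat.nth p, Nat.nth_strictMono hp, fun n => Nat.nth_mem_of_infinite hp n⟩

lemma bool_pigeonhole (q : ℕ → Bool) : ∃ b, {n | q n = b}.Infinite := by
  by_contra h
  push_neg at h
  have h1 : ¬ {n | q n = true}.Infinite := Set.not_infinite.mpr (h true)
  have h2 : ¬ {n | q n = false}.Infinite := Set.not_infinite.mpr (h false)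
  rw [Set.not_infinite] at h1 h2
  refine Set.infinite_univ (α := ℕ) (Set.Finite.subset (h1.union h2) ?_)
  intro n _
  rcases Bool.eq_false_or_eq_true (q n) with h | h
  · exact Or.inl h
  · exact Or.inr h

/-- Ramsey step. -/
lemma ramsey_step (c : ℕ → ℕ → Bool) (S : Set ℕ) (hS : S.Infinite) :
    ∃ (a : ℕ) (b : Bool) (S' : Set ℕ), S'.Infinite ∧ a ∈ S ∧ S' ⊆ S ∧
      ∀ n ∈ S', a < n ∧ c a n = b := by
  obtain ⟨a, ha⟩ := hS.nonempty
  have hSgi : {n ∈ S | a < n}.Infinite := by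
    have hsub : S ⊆ {n ∈ S | a < n} ∪ {n | n ≤ a} := by
      intro n hn
      rcases le_or_gt n a with h | h
      · exact Or.inr h
      · exact Or.inl ⟨hn, h⟩
    by_contra hfin
    rw [Set.not_infinite] at hfin
    exact hS (Set.Finite.subset (hfin.union (Set.finite_le_nat a)) hsub)
  have : {n ∈ S | a < n} ⊆ {n | n ∈ S ∧ a < n ∧ c a n = true} ∪
      {n | n ∈ S ∧ a < n ∧ c a n = false} := by
    intro n hn
    rcases Bool.eq_false_or_eq_true (c a n) with h | h
    · exact Or.inl ⟨hn.1, hn.2, h⟩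
    · exact Or.inr ⟨hn.1, hn.2, h⟩
  have hone : {n | n ∈ S ∧ a < n ∧ c a n = true}.Infinite ∨
      {n | n ∈ S ∧ a < n ∧ c a n = false}.Infinite := by
    by_contra h
    push_neg at h
    exact hSgi (Set.Finite.subset (h.1.union h.2) this)
  rcases hone with h | h
  · exact ⟨a, true, _, h, ha, fun n hn => hn.1, fun n hn => hn.2⟩
  · exact ⟨a, false, _, h, ha, fun n hn => hn.1, fun n hn => hn.2⟩

/-- Infinite Ramsey theorem for pairs, two colors. -/
lemma ramsey_pairs (c : ℕ → ℕ → Bool) :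
    ∃ (e : ℕ → ℕ) (b : Bool), StrictMono e ∧ ∀ m n, m < n → c (e m) (e n) = b := by
  -- build the nested sequence
  classical
  choose pa pb pS hInf hmem hsub hprop using ramsey_step c
  -- iterate: state = (S, infinite proof)
  let step : {S : Set ℕ // S.Infinite} → {S : Set ℕ // S.Infinite} :=
    fun ⟨S, hS⟩ => ⟨pS S hS, hInf S hS⟩
  let chain : ℕ → {S : Set ℕ // S.Infinite} :=
    fun n => step^[n] ⟨Set.univ, Set.infinite_univ⟩
  have hchain_succ : ∀ n, chain (n + 1) = step (chain n) := by
    intro n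
    simp only [chain, Function.iterate_succ_apply']
  set a : ℕ → ℕ := fun n => pa (chain n).1 (chain n).2 with ha
  set bb : ℕ → Bool := fun n => pb (chain n).1 (chain n).2 with hbb
  -- chain is decreasing, a n ∈ chain n, chain (n+1) elements are > a n with color bb n
  have hstep : ∀ n, (chain (n+1)).1 = pS (chain n).1 (chain n).2 := by
    intro n; rw [hchain_succ n]
  have hmem' : ∀ n, a n ∈ (chain n).1 := fun n => hmem (chain n).1 (chain n).2
  have hsub' : ∀ n, (chain (n+1)).1 ⊆ (chain n).1 := by
    intro n; rw [hstep n]; exact hsub (chain n).1 (chain n).2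
  have hprop' : ∀ n, ∀ m ∈ (chain (n+1)).1, a n < m ∧ c (a n) m = bb n := by
    intro n; rw [hstep n]; exact hprop (chain n).1 (chain n).2
  have hchain_le : ∀ m n, m ≤ n → (chain n).1 ⊆ (chain m).1 := by
    intro m n hmn
    induction n with
    | zero => simp_all
    | succ k ih =>
      rcases Nat.lt_or_ge m (k+1) with h | h
      · exact (hsub' k).trans (ih (Nat.lt_succ_iff.mp h))
      · have : m = k + 1 := le_antisymm (Nat.le_of_lt_succ (Nat.lt_succ_of_le hmn)) h
        · subst this; exact subset_rfl
  have key : ∀ m n, m < n → a m < a n ∧ c (a m) (a n) = bb m := by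
    intro m n hmn
    exact hprop' m (a n) (hchain_le (m+1) n hmn (hmem' n))
  have hamono : StrictMono a := strictMono_nat_of_lt_succ (fun n => (key n (n+1) (Nat.lt_succ_self n)).1)
  -- pigeonhole on bb
  obtain ⟨b, hb⟩ := bool_pigeonhole bb
  obtain ⟨e, he, hbe⟩ := mono_subseq_of_infinite hb
  refine ⟨a ∘ e, b, hamono.comp he, ?_⟩
  intro m n hmn
  rw [← hbe m]
  exact (key (e m) (e n) (he hmn)).2


variable {X : Type*} [MeasurableSpace X] (μ : Measure X) [IsProbabilityMeasure μ]

local notation "ι" S => Set.indicator S (fun _ => (1:ℝ))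

lemma ind_mul (S T : Set X) (x : X) :
    Set.indicator S (fun _ => (1:ℝ)) x * Set.indicator T (fun _ => (1:ℝ)) x
      = Set.indicator (S ∩ T) (fun _ => (1:ℝ)) x := by
  by_cases h1 : x ∈ S <;> by_cases h2 : x ∈ T <;>
    simp [Set.indicator_apply, h1, h2, Set.mem_inter_iff]

lemma ind_integrable {S : Set X} (hS : MeasurableSet S) :
    Integrable (Set.indicator S (fun _ => (1:ℝ))) μ :=
  (integrable_const (1:ℝ)).indicator hS

lemma ind_integral {S : Set X} (hS : MeasurableSet S) :
    ∫ x, Set.indicator S (fun _ => (1:ℝ)) x ∂μ = (μ S).toReal := by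
  rw [MeasureTheory.integral_indicator_const (1:ℝ) hS]; simp; rfl

/-- Cauchy–Schwarz for covariances of indicators. -/
lemma cov_cauchy_schwarz (A : Set X) (hA : MeasurableSet A) (N : ℕ)
    (C : ℕ → Set X) (hC : ∀ k, MeasurableSet (C k)) :
    (∑ k ∈ range N, ((μ (A ∩ C k)).toReal - (μ A).toReal * (μ (C k)).toReal))^2
      ≤ ∑ k ∈ range N, ∑ l ∈ range N,
          ((μ (C k ∩ C l)).toReal - (μ (C k)).toReal * (μ (C l)).toReal) := by
  classical
  set a : ℝ := (μ A).toReal with haa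
  set b : ℕ → ℝ := fun k => (μ (C k)).toReal with hb
  set u : ℕ → X → ℝ := fun k x => Set.indicator (C k) (fun _ => (1:ℝ)) x - b k with hu
  set ψ : X → ℝ := fun x => ∑ k ∈ range N, u k x with hψ
  set iA : X → ℝ := fun x => Set.indicator A (fun _ => (1:ℝ)) x with hiA
  -- basic integrability and integrals
  have hui : ∀ k, Integrable (u k) μ := fun k => (ind_integrable μ (hC k)).sub (integrable_const _)
  have huint : ∀ k, ∫ x, u k x ∂μ = 0 := by
    intro k
    rw [integral_sub (ind_integrable μ (hC k)) (integrable_const _), ind_integral μ (hC k)]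
    simp [hb]
  -- u k * u l
  have huu_eq : ∀ k l, (fun x => u k x * u l x) =
      (fun x => Set.indicator (C k ∩ C l) (fun _ => (1:ℝ)) x
        - b l * Set.indicator (C k) (fun _ => (1:ℝ)) x
        - b k * Set.indicator (C l) (fun _ => (1:ℝ)) x + b k * b l) := by
    intro k l
    funext x
    simp only [hu]
    rw [← ind_mul]
    ring
  have huu_int : ∀ k l, Integrable (fun x => u k x * u l x) μ := by
    intro k l
    rw [huu_eq]
    exact ((((ind_integrable μ ((hC k).inter (hC l))).sub
      ((ind_integrable μ (hC k)).const_mul _)).sub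
      ((ind_integrable μ (hC l)).const_mul _)).add (integrable_const _))
  have huu_integral : ∀ k l, ∫ x, u k x * u l x ∂μ
      = (μ (C k ∩ C l)).toReal - b k * b l := by
    intro k l
    rw [huu_eq]
    rw [integral_add, integral_sub, integral_sub]
    · rw [ind_integral μ ((hC k).inter (hC l)), integral_const_mul, integral_const_mul,
        ind_integral μ (hC k), ind_integral μ (hC l), integral_const]
      simp only [probReal_univ, measure_univ, ENNReal.toReal_one, smul_eq_mul, one_mul]
      ring
    · exact ind_integrable μ ((hC k).inter (hC l))
    · exact (ind_integrable μ (hC k)).const_mul _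
    · exact (ind_integrable μ ((hC k).inter (hC l))).sub ((ind_integrable μ (hC k)).const_mul _)
    · exact (ind_integrable μ (hC l)).const_mul _
    · exact ((ind_integrable μ ((hC k).inter (hC l))).sub
        ((ind_integrable μ (hC k)).const_mul _)).sub ((ind_integrable μ (hC l)).const_mul _)
    · exact integrable_const _
  -- u k * iA
  have huA_eq : ∀ k, (fun x => u k x * iA x) =
      (fun x => Set.indicator (C k ∩ A) (fun _ => (1:ℝ)) x
        - b k * Set.indicator A (fun _ => (1:ℝ)) x) := by
    intro k
    funext x
    simp only [hu, hiA]
    rw [← ind_mul]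
    ring
  have huA_int : ∀ k, Integrable (fun x => u k x * iA x) μ := by
    intro k
    rw [huA_eq]
    exact (ind_integrable μ ((hC k).inter hA)).sub ((ind_integrable μ hA).const_mul _)
  have huA_integral : ∀ k, ∫ x, u k x * iA x ∂μ = (μ (A ∩ C k)).toReal - a * b k := by
    intro k
    rw [huA_eq, integral_sub (ind_integrable μ ((hC k).inter hA))
      ((ind_integrable μ hA).const_mul _), ind_integral μ ((hC k).inter hA),
      integral_const_mul, ind_integral μ hA, Set.inter_comm]
    ring
  -- iA * iA
  have hAA : ∀ x, iA x * iA x = iA x := by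
    intro x
    simp only [hiA]
    rw [ind_mul, Set.inter_self]
  -- the three key quantities
  set I1 : ℝ := ∑ k ∈ range N, ((μ (A ∩ C k)).toReal - a * b k) with hI1
  set I2 : ℝ := ∑ k ∈ range N, ∑ l ∈ range N, ((μ (C k ∩ C l)).toReal - b k * b l) with hI2
  -- quadratic in t
  have hquad : ∀ t : ℝ, 0 ≤ a * (t * t) + (-2 * I1) * t + I2 := by
    intro t
    have hnn : 0 ≤ ∫ x, (ψ x - t * iA x)^2 ∂μ := integral_nonneg (fun x => sq_nonneg _)
    have hexpand : (fun x => (ψ x - t * iA x)^2) =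
        (fun x => (∑ k ∈ range N, ∑ l ∈ range N, u k x * u l x)
          - (2*t) * (∑ k ∈ range N, u k x * iA x) + (t*t) * iA x) := by
      funext x
      have h1 : ψ x * ψ x = ∑ k ∈ range N, ∑ l ∈ range N, u k x * u l x := by
        simp only [hψ]
        rw [Finset.sum_mul_sum]
      have h2 : ψ x * iA x = ∑ k ∈ range N, u k x * iA x := by
        simp only [hψ]
        rw [Finset.sum_mul]
      have h3 := hAA x
      linear_combination h1 - (2*t)*h2 + (t*t)*h3
    rw [hexpand] at hnn
    have hint1 : Integrable (fun x => ∑ k ∈ range N, ∑ l ∈ range N, u k x * u l x) μ :=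
      integrable_finset_sum _ (fun k _ => integrable_finset_sum _ (fun l _ => huu_int k l))
    have hint2 : Integrable (fun x => ∑ k ∈ range N, u k x * iA x) μ :=
      integrable_finset_sum _ (fun k _ => huA_int k)
    rw [integral_add, integral_sub hint1 (hint2.const_mul _)] at hnn
    · rw [integral_finset_sum _ (fun k _ => integrable_finset_sum _ (fun l _ => huu_int k l)),
        integral_const_mul, integral_finset_sum _ (fun k _ => huA_int k),
        integral_const_mul, ind_integral μ hA] at hnn
      have e1 : ∑ k ∈ range N, ∫ x, ∑ l ∈ range N, u k x * u l x ∂μ = I2 := by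
        rw [hI2]
        refine Finset.sum_congr rfl (fun k _ => ?_)
        rw [integral_finset_sum _ (fun l _ => huu_int k l)]
        exact Finset.sum_congr rfl (fun l _ => huu_integral k l)
      have e2 : ∑ k ∈ range N, ∫ x, u k x * iA x ∂μ = I1 := by
        rw [hI1]
        exact Finset.sum_congr rfl (fun k _ => huA_integral k)
      rw [e1, e2] at hnn
      nlinarith [hnn]
    · exact hint1.sub (hint2.const_mul _)
    · exact (ind_integrable μ hA).const_mul _
  -- discriminant
  have hd := discrim_le_zero hquad
  rw [discrim] at hd
  have ha1 : a ≤ 1 := by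
    rw [haa]
    exact ENNReal.toReal_le_of_le_ofReal zero_le_one (by simpa using prob_le_one (μ := μ) (s := A))
  have hI2nn : 0 ≤ I2 := by
    have := hquad 0
    simpa using this
  have haI : I1^2 ≤ a * I2 := by nlinarith [hd]
  calc I1^2 ≤ a * I2 := haI
    _ ≤ 1 * I2 := by nlinarith [hI2nn, ha1]
    _ = I2 := one_mul _

end Helpers

/-- The difference set of a sequence in an additive group. -/
def DiffSet {G : Type*} [AddCommGroup G] (x : ℕ → G) : Set G :=
  {g | ∃ m n : ℕ, m < n ∧ g = x n - x m}

/-- A Δ-set: contains the difference set of an injective sequence. -/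
def IsDeltaSet {G : Type*} [AddCommGroup G] (A : Set G) : Prop :=
  ∃ x : ℕ → G, Function.Injective x ∧ DiffSet x ⊆ A

/-- A Δ*-set: meets every Δ-set. -/
def IsDeltaStarSet {G : Type*} [AddCommGroup G] (A : Set G) : Prop :=
  ∀ B : Set G, IsDeltaSet B → (A ∩ B).Nonempty

/-- Strong mixing of a measure-preserving action of `(F_q[x], +)`. -/
def StrongMixing {F : Type*} [Field F] [Fintype F]
    {X : Type*} [MeasurableSpace X] (μ : Measure X)
    (T : Polynomial F → X → X) : Prop :=
  ∀ A B : Set X, MeasurableSet A → MeasurableSet B → 0 < μ A → 0 < μ B →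
    ∀ ε : ℝ, 0 < ε →
      {f : Polynomial F |
        ¬ |(μ (A ∩ (T f) ⁻¹' B)).toReal - (μ A).toReal * (μ B).toReal| < ε}.Finite

theorem strong_mixing_iff_deltaStar
    {F : Type*} [Field F] [Fintype F]
    {X : Type*} [MeasurableSpace X] (μ : Measure X) [IsProbabilityMeasure μ]
    (T : Polynomial F → X → X)
    (hhom : ∀ f g : Polynomial F, T (f + g) = T f ∘ T g)
    (hmp : ∀ f : Polynomial F, MeasurePreserving (T f) μ μ) :
    StrongMixing μ T ↔
      ∀ ε : ℝ, 0 < ε → ∀ A : Set X, MeasurableSet A → 0 < μ A →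
        IsDeltaStarSet {f : Polynomial F |
          |(μ (A ∩ (T f) ⁻¹' A)).toReal - (μ A).toReal ^ 2| < ε} := by
  constructor
  · -- strong mixing ⇒ Δ*
    intro hsm ε hε A hA hμA Bs hBs
    obtain ⟨x, hxinj, hsub⟩ := hBs
    have hfin := hsm A A hA hA hμA hμA ε hε
    set K := {f : Polynomial F |
      ¬ |(μ (A ∩ (T f) ⁻¹' A)).toReal - (μ A).toReal * (μ A).toReal| < ε} with hK
    set y : ℕ → Polynomial F := fun n => x (n + 1) - x 0 with hy
    have hyinj : Function.Injective y := by
      intro m n h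
      have := hxinj (by
        have : x (m + 1) = x (n + 1) := by
          have h' : x (m + 1) - x 0 = x (n + 1) - x 0 := h
          linear_combination (norm := abel) h'
        exact this)
      omega
    have hex : ∃ n, y n ∉ K := by
      by_contra h
      push_neg at h
      exact (Set.infinite_of_injective_forall_mem hyinj h) hfin
    obtain ⟨n, hn⟩ := hex
    refine ⟨y n, ?_, hsub ⟨0, n + 1, Nat.succ_pos n, rfl⟩⟩
    simp only [Set.mem_setOf_eq, hK, not_not] at hn ⊢
    rw [sq]
    exact hn
  · -- Δ* ⇒ strong mixing
    intro hΔ A B hA hB hμA hμB ε hε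
    by_contra hfin
    have hinf : {f : Polynomial F |
        ¬ |(μ (A ∩ (T f) ⁻¹' B)).toReal - (μ A).toReal * (μ B).toReal| < ε}.Infinite := hfin
    set a : ℝ := (μ A).toReal with haa
    set bb : ℝ := (μ B).toReal with hbbb
    -- an injective sequence inside the bad set
    set f : ℕ → Polynomial F := fun n => (hinf.natEmbedding _ n).1 with hf
    have hfinj : Function.Injective f :=
      fun m n h => (hinf.natEmbedding _).injective (Subtype.ext h)
    have hfbad : ∀ n, ¬ |(μ (A ∩ (T (f n)) ⁻¹' B)).toReal - a * bb| < ε :=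
      fun n => (hinf.natEmbedding _ n).2
    set ε' : ℝ := ε ^ 2 / 2 with hε'
    have hε'pos : 0 < ε' := by positivity
    -- Ramsey coloring by correlation of differences with B
    set c : ℕ → ℕ → Bool := fun m n =>
      decide (|(μ (B ∩ (T (f n - f m)) ⁻¹' B)).toReal - bb ^ 2| < ε') with hc
    obtain ⟨e, b0, he, hmono⟩ := ramsey_pairs c
    have hb0 : b0 = true := by
      by_contra hb0
      have hb0' : b0 = false := by simpa using hb0
      subst hb0'
      obtain ⟨g, hg1, hg2⟩ := hΔ ε' hε'pos B hB hμB (DiffSet (f ∘ e))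
        ⟨f ∘ e, hfinj.comp he.injective, subset_rfl⟩
      obtain ⟨m, n, hmn, rfl⟩ := hg2
      have := hmono m n hmn
      rw [hc] at this
      simp only [decide_eq_false_iff_not] at this
      exact this (by simpa using hg1)
    subst hb0
    have hgood : ∀ m n, m < n →
        |(μ (B ∩ (T (f (e n) - f (e m))) ⁻¹' B)).toReal - bb ^ 2| < ε' := by
      intro m n hmn
      have := hmono m n hmn
      rw [hc] at this
      simpa using this
    -- pigeonhole on the sign of the correlation with A
    set q : ℕ → Bool := fun n =>
      decide (0 ≤ (μ (A ∩ (T (f (e n))) ⁻¹' B)).toReal - a * bb) with hq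
    obtain ⟨s, hs⟩ := bool_pigeonhole q
    obtain ⟨e₂, he₂, hqs⟩ := mono_subseq_of_infinite hs
    set w : ℕ → Polynomial F := fun n => f (e (e₂ n)) with hw
    set C : ℕ → Set X := fun k => (T (w k)) ⁻¹' B with hC
    have hCmeas : ∀ k, MeasurableSet (C k) := fun k => (hmp (w k)).measurable hB
    have hCb : ∀ k, μ (C k) = μ B := fun k =>
      (hmp (w k)).measure_preimage hB.nullMeasurableSet
    -- pairwise correlations
    have hpair : ∀ k l, k < l → μ (C k ∩ C l) = μ (B ∩ (T (w l - w k)) ⁻¹' B) := by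
      intro k l hkl
      have hcomp : T (w l) = T (w l - w k) ∘ T (w k) := by
        rw [← hhom]
        congr 1
        ring
      have : C k ∩ C l = (T (w k)) ⁻¹' (B ∩ (T (w l - w k)) ⁻¹' B) := by
        rw [hC]
        simp only [hcomp, Set.preimage_inter, Set.preimage_comp]
      rw [this]
      exact (hmp (w k)).measure_preimage
        ((hB.inter ((hmp _).measurable hB)).nullMeasurableSet)
    have hpairgood : ∀ k l, k ≠ l → (μ (C k ∩ C l)).toReal ≤ bb ^ 2 + ε' := by
      intro k l hkl
      rcases Nat.lt_or_ge k l with h | h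
      · rw [hpair k l h]
        have := hgood (e₂ k) (e₂ l) (he₂ h)
        have habs := abs_lt.mp this
        rw [hw]
        linarith [habs.2]
      · have hlk : l < k := lt_of_le_of_ne h (Ne.symm hkl)
        rw [Set.inter_comm, hpair l k hlk]
        have := hgood (e₂ l) (e₂ k) (he₂ hlk)
        have habs := abs_lt.mp this
        rw [hw]
        linarith [habs.2]
    -- sign lemma
    have hd : ∀ k, ε ≤ |(μ (A ∩ C k)).toReal - a * bb| := by
      intro k
      exact not_lt.mp (hfbad (e (e₂ k)))
    have hsign : (∀ k, ε ≤ (μ (A ∩ C k)).toReal - a * bb) ∨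
        (∀ k, (μ (A ∩ C k)).toReal - a * bb ≤ -ε) := by
      rcases Bool.eq_false_or_eq_true s with hstrue | hsfalse
      · left
        intro k
        have h1 := hqs k
        rw [hstrue, hq] at h1
        simp only [decide_eq_true_eq] at h1
        have h1' : 0 ≤ (μ (A ∩ C k)).toReal - a * bb := h1
        have := hd k
        rw [abs_of_nonneg h1'] at this
        linarith
      · right
        intro k
        have h1 := hqs k
        rw [hsfalse, hq] at h1
        simp only [decide_eq_false_iff_not, not_le] at h1
        have h1' : (μ (A ∩ C k)).toReal - a * bb < 0 := h1
        have := hd k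
        rw [abs_of_neg h1'] at this
        linarith
    -- choose N and conclude
    obtain ⟨N, hN⟩ := exists_nat_gt (2 / ε ^ 2)
    have hNpos : 0 < (N : ℝ) := lt_trans (by positivity) hN
    have hNe : 2 < (N : ℝ) * ε ^ 2 := by
      rw [div_lt_iff₀ (by positivity)] at hN
      linarith
    have hcs := cov_cauchy_schwarz μ A hA N C hCmeas
    -- lower bound on LHS
    have hlhs : (N : ℝ) ^ 2 * ε ^ 2 ≤
        (∑ k ∈ range N, ((μ (A ∩ C k)).toReal - a * (μ (C k)).toReal)) ^ 2 := by
      have hterm : ∀ k, (μ (A ∩ C k)).toReal - a * (μ (C k)).toReal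
          = (μ (A ∩ C k)).toReal - a * bb := by
        intro k; rw [hCb k]
      rcases hsign with h | h
      · have hsum : (N : ℝ) * ε ≤ ∑ k ∈ range N, ((μ (A ∩ C k)).toReal - a * (μ (C k)).toReal) := by
          calc (N : ℝ) * ε = ∑ _k ∈ range N, ε := by
                rw [Finset.sum_const, card_range, nsmul_eq_mul]
            _ ≤ _ := Finset.sum_le_sum (fun k _ => by rw [hterm k]; exact h k)
        nlinarith [hsum, mul_pos hNpos hε]
      · have hsum : ∑ k ∈ range N, ((μ (A ∩ C k)).toReal - a * (μ (C k)).toReal) ≤ -((N:ℝ) * ε) := by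
          calc _ ≤ ∑ _k ∈ range N, (-ε) := Finset.sum_le_sum (fun k _ => by rw [hterm k]; exact h k)
            _ = -((N:ℝ) * ε) := by rw [Finset.sum_const, card_range, nsmul_eq_mul]; ring
        nlinarith [hsum, mul_pos hNpos hε]
    -- upper bound on RHS
    have hrhs : ∑ k ∈ range N, ∑ l ∈ range N,
        ((μ (C k ∩ C l)).toReal - (μ (C k)).toReal * (μ (C l)).toReal)
        ≤ (N : ℝ) + (N : ℝ) ^ 2 * ε' := by
      have hbb1 : bb ≤ 1 := by
        rw [hbbb]
        exact ENNReal.toReal_le_of_le_ofReal zero_le_one (by simpa using prob_le_one (μ := μ) (s := B))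
      have hbb0 : 0 ≤ bb := ENNReal.toReal_nonneg
      have hterm : ∀ k ∈ range N, ∀ l ∈ range N,
          (μ (C k ∩ C l)).toReal - (μ (C k)).toReal * (μ (C l)).toReal
            ≤ if k = l then (1:ℝ) else ε' := by
        intro k _ l _
        rw [hCb k, hCb l, ← hbbb]
        by_cases hkl : k = l
        · subst hkl
          rw [if_pos rfl, Set.inter_self, hCb k, ← hbbb]
          nlinarith [hbb1, hbb0]
        · rw [if_neg hkl]
          have := hpairgood k l hkl
          nlinarith [this]
      calc ∑ k ∈ range N, ∑ l ∈ range N,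
            ((μ (C k ∩ C l)).toReal - (μ (C k)).toReal * (μ (C l)).toReal)
          ≤ ∑ k ∈ range N, ∑ l ∈ range N, (if k = l then (1:ℝ) else ε') :=
            Finset.sum_le_sum (fun k hk => Finset.sum_le_sum (fun l hl => hterm k hk l hl))
        _ = ∑ _k ∈ range N, ((1 - ε') + (N:ℝ) * ε') := by
            refine Finset.sum_congr rfl (fun k hk => ?_)
            have hsplit : ∀ l ∈ range N,
                (if k = l then (1:ℝ) else ε') = (if k = l then (1 - ε') else 0) + ε' := by
              intro l _; split_ifs <;> ring
            rw [Finset.sum_congr rfl hsplit, Finset.sum_add_distrib, Finset.sum_ite_eq,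
              if_pos hk, Finset.sum_const, card_range, nsmul_eq_mul]
        _ ≤ (N : ℝ) + (N : ℝ) ^ 2 * ε' := by
            rw [Finset.sum_const, card_range, nsmul_eq_mul]
            nlinarith [hε'pos.le, hNpos]
    have hfinal : (N:ℝ)^2 * ε^2 ≤ (N:ℝ) + (N:ℝ)^2 * ε' := le_trans hlhs (le_trans hcs hrhs)
    rw [hε'] at hfinal
    nlinarith [hfinal, hNe, hNpos]
end

section
/- Let φ̃ : βS → βT be the continuous extension of a surjective homomorphism φ : S → T of discrete semigroups, and suppose p is a minimal idempotent of βT. If q is an idempotent in K(φ̃^{-1}({p})) (the smallest ideal of the compact right-topological semigroup φ̃^{-1}({p})), then q is a minimal idempotent of βS. -/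
attribute [local instance] Ultrafilter.mul Ultrafilter.semigroup

lemma map_mul_aux {S T : Type*} [Semigroup S] [Semigroup T]
    (φ : S → T) (hhom : ∀ s s' : S, φ (s * s') = φ s * φ s')
    (U V : Ultrafilter S) :
    Ultrafilter.map φ (U * V) = Ultrafilter.map φ U * Ultrafilter.map φ V := by
  apply Ultrafilter.coe_inj.mp
  apply Filter.ext' fun pr => ?_
  simp only [Ultrafilter.coe_map, Filter.eventually_map, Ultrafilter.eventually_mul]
  constructor
  · intro h; filter_upwards [h] with m hm; filter_upwards [hm] with m' hm'
    rwa [← hhom]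
  · intro h; filter_upwards [h] with m hm; filter_upwards [hm] with m' hm'
    rwa [hhom]

/-- Idempotents of the smallest ideal of the fiber are exactly the idempotents of the fiber
that are minimal in the fiber; a minimal idempotent of `βS` is one below which there is
no strictly smaller idempotent (`r ≤ q` iff `r * q = r` and `q * r = r`). -/
theorem minimal_idempotent_in_fiber_is_minimal
    {S T : Type*} [Semigroup S] [Semigroup T]
    (φ : S → T) (hhom : ∀ s s' : S, φ (s * s') = φ s * φ s')
    (hsurj : Function.Surjective φ)
    (p : Ultrafilter T) (hp : p * p = p)
    (hpmin : ∀ r : Ultrafilter T, r * r = r → r * p = r → p * r = r → r = p)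
    (q : Ultrafilter S) (hq : q * q = q)
    (hqfiber : Ultrafilter.map φ q = p)
    (hqmin : ∀ r : Ultrafilter S, Ultrafilter.map φ r = p →
      r * r = r → r * q = r → q * r = r → r = q) :
    ∀ r : Ultrafilter S, r * r = r → r * q = r → q * r = r → r = q := by
  intro r hrr hrq hqr
  have h1 : Ultrafilter.map φ r * Ultrafilter.map φ r = Ultrafilter.map φ r := by
    rw [← map_mul_aux φ hhom, hrr]
  have h2 : Ultrafilter.map φ r * p = Ultrafilter.map φ r := by
    rw [← hqfiber, ← map_mul_aux φ hhom, hrq]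
  have h3 : p * Ultrafilter.map φ r = Ultrafilter.map φ r := by
    rw [← hqfiber, ← map_mul_aux φ hhom, hqr]
  exact hqmin r (hpmin _ h1 h2 h3) hrr hrq hqr
end

section
/- Let φ(f) = deg f from (F_q[x]∖{0}, ·) to (ℕ, +). A set C ⊆ ℕ is a central set in (ℕ,+) if and only if φ^{-1}(C) is a central set in (F_q[x]∖{0}, ·). -/
open Polynomial

attribute [local instance] Ultrafilter.add Ultrafilter.addSemigroup
  Ultrafilter.mul Ultrafilter.semigroup

section Aux

open Filter

/-- `Ultrafilter.map` is continuous. -/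
theorem continuous_ultrafilter_map {α β : Type*} (f : α → β) :
    Continuous (Ultrafilter.map f) :=
  ultrafilterBasis_is_basis.continuous_iff.2 <| Set.forall_mem_range.mpr fun s ↦
    ultrafilter_isOpen_basic (f ⁻¹' s)

/-- Pushing forward ultrafilters along a (mixed mul/add) homomorphism is a homomorphism. -/
theorem ultrafilter_map_mul_add {M A : Type*} [Semigroup M] [AddSemigroup A]
    (φ : M → A) (hφ : ∀ a b, φ (a * b) = φ a + φ b) (U V : Ultrafilter M) :
    Ultrafilter.map φ (U * V) = Ultrafilter.map φ U + Ultrafilter.map φ V := by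
  refine Ultrafilter.coe_inj.mp (Filter.ext' fun p => ?_)
  simp only [Ultrafilter.coe_map, eventually_map, Ultrafilter.eventually_add,
    Ultrafilter.eventually_mul, hφ]

variable {M : Type*} [Semigroup M]

/-- Nonempty closed left ideals of `Ultrafilter M`. -/
def IsLI (L : Set (Ultrafilter M)) : Prop :=
  L.Nonempty ∧ IsClosed L ∧ ∀ x : Ultrafilter M, ∀ y ∈ L, x * y ∈ L

theorem exists_minimal_LI (L₀ : Set (Ultrafilter M)) (h : IsLI L₀) :
    ∃ L, L ⊆ L₀ ∧ Minimal IsLI L := by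
  refine zorn_superset_nonempty {L | IsLI L} ?_ L₀ h
  intro c hcs hc hcne
  refine ⟨⋂₀ c, ⟨?_, isClosed_sInter fun t ht => (hcs ht).2.1, fun x y hy => ?_⟩,
    fun s hs => Set.sInter_subset_of_mem hs⟩
  · have := @IsCompact.nonempty_iInter_of_directed_nonempty_isCompact_isClosed
      _ _ _ hcne.coe_sort ((↑) : c → Set (Ultrafilter M))
      (DirectedOn.directed_val (IsChain.directedOn hc.symm))
      (fun i => (hcs i.prop).1) (fun i => (hcs i.prop).2.1.isCompact)
      (fun i => (hcs i.prop).2.1)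
    rwa [Set.sInter_eq_iInter]
  · rw [Set.mem_sInter] at hy ⊢
    exact fun t ht => (hcs ht).2.2 x y (hy t ht)

theorem range_mul_right_isLI (x : Ultrafilter M) :
    IsLI (Set.range (· * x)) := by
  refine ⟨⟨x * x, x, rfl⟩, ((isCompact_range (Ultrafilter.continuous_mul_left x)).isClosed), ?_⟩
  rintro z - ⟨y, rfl⟩
  exact ⟨z * y, by dsimp only; exact mul_assoc z y x⟩

theorem minimal_LI_eq_range {L : Set (Ultrafilter M)} (hL : Minimal IsLI L)
    {x : Ultrafilter M} (hx : x ∈ L) : Set.range (· * x) = L := by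
  refine hL.eq_of_le (range_mul_right_isLI x) ?_
  rintro - ⟨y, rfl⟩
  exact hL.prop.2.2 y x hx

/-- Below any idempotent ultrafilter there is a minimal idempotent ultrafilter. -/
theorem exists_minimal_idempotent_le {e : Ultrafilter M} (he : e * e = e) :
    ∃ f : Ultrafilter M, f * f = f ∧ f * e = f ∧ e * f = f ∧
      ∀ r : Ultrafilter M, r * r = r → r * f = r → f * r = r → r = f := by
  obtain ⟨L, hLsub, hLmin⟩ := exists_minimal_LI (Set.range (· * e)) (range_mul_right_isLI e)
  -- Ellis: get an idempotent `f'` in the compact subsemigroup `L`.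
  obtain ⟨f', hf'L, hf'⟩ := exists_idempotent_in_compact_subsemigroup
    Ultrafilter.continuous_mul_left L hLmin.prop.1 hLmin.prop.2.1.isCompact
    (fun a ha b hb => hLmin.prop.2.2 a b hb)
  obtain ⟨z, hz⟩ : f' ∈ Set.range (· * e) := hLsub hf'L
  have hf'e : f' * e = f' := by rw [← hz, mul_assoc, he]
  set f := e * f' with hf
  have hff : f * f = f := by
    rw [hf, mul_assoc, ← mul_assoc f' e f', hf'e, hf']
  have hfe : f * e = f := by rw [hf, mul_assoc, hf'e]
  have hef : e * f = f := by rw [hf, ← mul_assoc, he]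
  have hfL : f ∈ L := by
    rw [← minimal_LI_eq_range hLmin hf'L]
    exact ⟨e, rfl⟩
  refine ⟨f, hff, hfe, hef, fun r hrr hrf hfr => ?_⟩
  have hrL : r ∈ L := by
    rw [← minimal_LI_eq_range hLmin hfL, ← hrf]
    exact ⟨r, rfl⟩
  obtain ⟨w, hw⟩ : f ∈ Set.range (· * r) := by
    rw [minimal_LI_eq_range hLmin hrL]; exact hfL
  have : f * r = f := by rw [← hw, mul_assoc, hrr]
  rw [← hfr, this]

end Aux

theorem central_correspondence_deg {F : Type*} [Field F] [Fintype F]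
    (C : Set ℕ) :
    IsCentralSet C ↔
      IsMulCentralSet ((fun f : nonZeroDivisors (Polynomial F) =>
        (f : Polynomial F).natDegree) ⁻¹' C) := by
  set S := nonZeroDivisors (Polynomial F)
  set φ : S → ℕ := fun f => (f : Polynomial F).natDegree with hφdef
  have hφ : ∀ a b : S, φ (a * b) = φ a + φ b := by
    intro a b
    have ha : (a : Polynomial F) ≠ 0 := nonZeroDivisors.ne_zero a.2
    have hb : (b : Polynomial F) ≠ 0 := nonZeroDivisors.ne_zero b.2
    simp only [hφdef, Submonoid.coe_mul]
    exact Polynomial.natDegree_mul ha hb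
  -- a section of φ
  set ψ : ℕ → S := fun n => ⟨X ^ n, mem_nonZeroDivisors_of_ne_zero (pow_ne_zero n X_ne_zero)⟩
    with hψdef
  have hψ : ∀ n, φ (ψ n) = n := fun n => by simp [hφdef, hψdef]
  set Φ : Ultrafilter S → Ultrafilter ℕ := Ultrafilter.map φ with hΦdef
  have hΦmul : ∀ U V : Ultrafilter S, Φ (U * V) = Φ U + Φ V :=
    ultrafilter_map_mul_add φ hφ
  have hΦsec : ∀ r : Ultrafilter ℕ, Φ (Ultrafilter.map ψ r) = r := by
    intro r
    rw [hΦdef, Ultrafilter.map_map]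
    have : φ ∘ ψ = id := funext hψ
    rw [this, Ultrafilter.map_id]
  constructor
  · rintro ⟨p, hpp, hpmin, hC⟩
    -- find an idempotent in the fiber over p
    have hT : IsLI (M := S) (Φ ⁻¹' {p}) → True := fun _ => trivial
    obtain ⟨e, heT, hee⟩ := exists_idempotent_in_compact_subsemigroup
      Ultrafilter.continuous_mul_left (Φ ⁻¹' {p})
      ⟨Ultrafilter.map ψ p, by simp [Set.mem_preimage, hΦsec p]⟩
      (((isClosed_singleton.preimage (continuous_ultrafilter_map φ))).isCompact)
      (by
        intro x hx y hy
        simp only [Set.mem_preimage, Set.mem_singleton_iff] at *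
        rw [hΦmul, hx, hy, hpp])
    have hΦe : Φ e = p := heT
    obtain ⟨f, hff, hfe, hef, hfmin⟩ := exists_minimal_idempotent_le hee
    have hΦf : Φ f = p := by
      refine hpmin (Φ f) ?_ ?_ ?_
      · rw [← hΦmul, hff]
      · rw [← hΦe, ← hΦmul, hfe]
      · rw [← hΦe, ← hΦmul, hef]
    refine ⟨f, hff, hfmin, ?_⟩
    have : C ∈ Φ f := hΦf ▸ hC
    exact Ultrafilter.mem_map.mp this
  · rintro ⟨q, hqq, hqmin, hCq⟩
    refine ⟨Φ q, by rw [← hΦmul, hqq], ?_, Ultrafilter.mem_map.mpr hCq⟩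
    intro r hrr hrp hpr
    -- build an idempotent in the fiber over r absorbed by q on the right
    obtain ⟨u, ⟨hΦu, huq⟩, huu⟩ := exists_idempotent_in_compact_subsemigroup
      Ultrafilter.continuous_mul_left
      ({x : Ultrafilter S | Φ x = r ∧ x * q = x})
      ⟨Ultrafilter.map ψ r * q, by
        constructor
        · rw [hΦmul, hΦsec, hrp]
        · rw [mul_assoc, hqq]⟩
      (IsClosed.isCompact (by
        apply IsClosed.inter
        · exact isClosed_singleton.preimage (continuous_ultrafilter_map φ)
        · exact isClosed_eq (Ultrafilter.continuous_mul_left q) continuous_id))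
      (by
        rintro x ⟨hx1, hx2⟩ y ⟨hy1, hy2⟩
        constructor
        · rw [hΦmul, hx1, hy1, hrr]
        · rw [mul_assoc, hy2])
    set v := q * u with hv
    have hvv : v * v = v := by rw [hv, mul_assoc, ← mul_assoc u q u, huq, huu]
    have hvq : v * q = v := by rw [hv, mul_assoc, huq]
    have hqv : q * v = v := by rw [hv, ← mul_assoc, hqq]
    have hvq' : v = q := hqmin v hvv hvq hqv
    have : Φ v = r := by rw [hv, hΦmul, hΦu, hpr]
    rw [← this, hvq']
end
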